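/- arXiv:2212.09542 — 2 statements merged into one kernel-verified Lean document; each statement's English description precedes it below -/
import Mathlib

section
/- Let μ : [0,1) → [0,∞) be nondecreasing and square-integrable, let j ∈ ℕ, and let μ^(j) be the dyadic average of μ at scale j. Then for every B > 0, the L¹ distance satisfies ∫₀¹ |μ(s) − μ^(j)(s)| ds ≤ (2/B)·(∫₀¹ μ(s)² ds) + B·2^{−j}. -/
open MeasureTheory

/-- The dyadic average of `f` at scale `j`: on each dyadic interval
`[(k-1)/2^j, k/2^j)` it equals `2^j` times the integral of `f` over that interval. -/
noncomputable def dyadicAvg (j : ℕ) (f : ℝ → ℝ) (s : ℝ) : ℝ :=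
  (2 : ℝ) ^ j *
    ∫ r in Set.Ico ((⌊(2 : ℝ) ^ j * s⌋ : ℝ) / (2 : ℝ) ^ j)
      (((⌊(2 : ℝ) ^ j * s⌋ : ℝ) + 1) / (2 : ℝ) ^ j), f r

/-!
Split `μ = min μ B + (μ - min μ B)`. On a dyadic interval the truncated part `min μ B` is
monotone, so its deviation from its mean is at most its increment across the interval; these
increments telescope to at most `B`, contributing `B · 2^{-j}`. The excess `μ - min μ B` is
nonnegative, so its mean deviation is at most twice its integral, and pointwise
`μ - min μ B ≤ μ² / B`.
-/

open Set

section Average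

variable {α : Type*} [MeasurableSpace α] {μ : Measure α}

lemma average_add {f g : α → ℝ} (hf : Integrable f μ) (hg : Integrable g μ) :
    ⨍ x, (f x + g x) ∂μ = ⨍ x, f x ∂μ + ⨍ x, g x ∂μ := by
  simp only [average_eq, integral_add hf hg, smul_add]

lemma integral_abs_sub_average_le [IsFiniteMeasure μ] {f g : α → ℝ} {a b : ℝ}
    (hf : Integrable f μ) (hg : Integrable g μ) (hg_mem : ∀ᵐ x ∂μ, g x ∈ Icc a b)
    (hgf : g ≤ᵐ[μ] f) :
    ∫ x, |f x - ⨍ y, f y ∂μ| ∂μ ≤ (b - a) * μ.real univ + 2 * ∫ x, (f x - g x) ∂μ := by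
  rcases eq_zero_or_neZero μ with rfl | _
  · simp
  have hfg : Integrable (fun x => f x - g x) μ := hf.sub hg
  have hA : ⨍ y, g y ∂μ ∈ Icc a b := (convex_Icc a b).average_mem isClosed_Icc hg_mem hg
  have hH : 0 ≤ ⨍ y, (f y - g y) ∂μ := by
    rw [average_eq]
    exact smul_nonneg (by positivity)
      (integral_nonneg_of_ae (hgf.mono fun x hx => sub_nonneg.2 hx))
  set H := ⨍ y, (f y - g y) ∂μ
  have hsplit : ⨍ y, f y ∂μ = ⨍ y, g y ∂μ + H := by
    rw [← average_add hg hfg]; simp only [add_sub_cancel]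
  have hpt : ∀ᵐ x ∂μ, |f x - ⨍ y, f y ∂μ| ≤ (b - a + H) + (f x - g x) := by
    filter_upwards [hg_mem, hgf] with x hx hxf
    rw [hsplit, abs_le]
    constructor <;> linarith [hx.1, hx.2, hA.1, hA.2]
  calc ∫ x, |f x - ⨍ y, f y ∂μ| ∂μ ≤ ∫ x, ((b - a + H) + (f x - g x)) ∂μ :=
        integral_mono_ae (hf.sub (integrable_const _)).abs ((integrable_const _).add hfg) hpt
    _ = (b - a) * μ.real univ + 2 * ∫ x, (f x - g x) ∂μ := by
        rw [integral_add (integrable_const _) hfg, integral_const, smul_eq_mul,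
          ← measure_smul_average μ (fun x => f x - g x), smul_eq_mul]
        ring

end Average

lemma setIntegral_Ico_eq_sum_Ico {f : ℝ → ℝ} {a : ℕ → ℝ} (ha : Monotone a) {n : ℕ}
    (hf : ∀ k < n, IntegrableOn f (Ico (a k) (a (k + 1)))) :
    ∫ x in Ico (a 0) (a n), f x = ∑ k ∈ Finset.range n, ∫ x in Ico (a k) (a (k + 1)), f x := by
  have hIco : ∀ {x y : ℝ}, x ≤ y → ∫ t in Ico x y, f t = ∫ t in x..y, f t := fun hxy => by
    rw [intervalIntegral.integral_of_le hxy, integral_Ico_eq_integral_Ioo,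
      integral_Ioc_eq_integral_Ioo]
  rw [hIco (ha (Nat.zero_le n)), ← intervalIntegral.sum_integral_adjacent_intervals fun k hk =>
    (intervalIntegrable_iff_integrableOn_Ico_of_le (ha k.le_succ)).2 (hf k hk)]
  exact Finset.sum_congr rfl fun k _ => (hIco (ha k.le_succ)).symm

section Dyadic

variable {j k : ℕ}

def dyadicIco (j k : ℕ) : Set ℝ := Ico ((k : ℝ) / 2 ^ j) ((k + 1) / 2 ^ j)

lemma measurableSet_dyadicIco : MeasurableSet (dyadicIco j k) := measurableSet_Ico

instance : IsFiniteMeasure (volume.restrict (dyadicIco j k)) := by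
  rw [dyadicIco]; infer_instance

lemma volume_real_dyadicIco : volume.real (dyadicIco j k) = ((2 : ℝ) ^ j)⁻¹ := by
  rw [dyadicIco, Real.volume_real_Ico_of_le (by gcongr; linarith)]
  ring

lemma dyadicIco_subset_Ico (hk : k < 2 ^ j) : dyadicIco j k ⊆ Ico 0 1 := by
  refine Ico_subset_Ico (by positivity) ?_
  rw [div_le_one (by positivity)]
  exact_mod_cast hk

lemma floor_two_pow_mul_eq_of_mem_dyadicIco {s : ℝ} (hs : s ∈ dyadicIco j k) :
    ⌊(2 : ℝ) ^ j * s⌋ = k := by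
  have h2 : (0 : ℝ) < 2 ^ j := by positivity
  obtain ⟨hl, hr⟩ := hs
  rw [div_le_iff₀ h2] at hl
  rw [lt_div_iff₀ h2] at hr
  rw [Int.floor_eq_iff]
  push_cast
  constructor <;> linarith

lemma dyadicAvg_eq_setAverage (f : ℝ → ℝ) {s : ℝ} (hs : s ∈ dyadicIco j k) :
    dyadicAvg j f s = ⨍ r in dyadicIco j k, f r := by
  rw [dyadicAvg, floor_two_pow_mul_eq_of_mem_dyadicIco hs, setAverage_eq, volume_real_dyadicIco,
    inv_inv, smul_eq_mul]
  rfl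

lemma integrableOn_abs_sub_dyadicAvg {f : ℝ → ℝ} (hf : IntegrableOn f (dyadicIco j k)) :
    IntegrableOn (fun s => |f s - dyadicAvg j f s|) (dyadicIco j k) :=
  IntegrableOn.congr_fun (f := fun s => |f s - ⨍ r in dyadicIco j k, f r|)
    (hf.sub (integrable_const _)).abs (fun s hs => by rw [dyadicAvg_eq_setAverage f hs])
    measurableSet_dyadicIco

lemma setIntegral_Ico_zero_one_eq_sum_dyadicIco (j : ℕ) {f : ℝ → ℝ}
    (hf : ∀ k < 2 ^ j, IntegrableOn f (dyadicIco j k)) :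
    ∫ x in Ico 0 1, f x = ∑ k ∈ Finset.range (2 ^ j), ∫ x in dyadicIco j k, f x := by
  have ha : Monotone fun k : ℕ => (k : ℝ) / 2 ^ j := fun m n hmn =>
    div_le_div_of_nonneg_right (by exact_mod_cast hmn) (by positivity)
  have hI : ∀ k : ℕ, dyadicIco j k = Ico ((k : ℝ) / 2 ^ j) (((k + 1 : ℕ) : ℝ) / 2 ^ j) := by
    intro k; rw [dyadicIco, Nat.cast_succ]
  convert setIntegral_Ico_eq_sum_Ico ha (n := 2 ^ j) fun k hk => (hI k ▸ hf k hk) using 2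
  · push_cast
    rw [zero_div, div_self (by positivity)]
  · rw [hI]

lemma setIntegral_abs_sub_dyadicAvg_le {f g T : ℝ → ℝ} (hf : IntegrableOn f (dyadicIco j k))
    (hg : IntegrableOn g (dyadicIco j k)) (hgf : ∀ s ∈ dyadicIco j k, g s ≤ f s)
    (hT : MonotoneOn T (Icc ((k : ℝ) / 2 ^ j) ((k + 1 : ℕ) / 2 ^ j)))
    (hgT : ∀ s ∈ dyadicIco j k, g s = T s) :
    ∫ s in dyadicIco j k, |f s - dyadicAvg j f s| ≤
      (T ((k + 1 : ℕ) / 2 ^ j) - T (k / 2 ^ j)) * ((2 : ℝ) ^ j)⁻¹ +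
        2 * ∫ s in dyadicIco j k, (f s - g s) := by
  have hg_mem : ∀ s ∈ dyadicIco j k, g s ∈ Icc (T (k / 2 ^ j)) (T ((k + 1 : ℕ) / 2 ^ j)) := by
    intro s ⟨hl, hr⟩
    have hr' : s ≤ ((k + 1 : ℕ) : ℝ) / 2 ^ j := by push_cast; exact hr.le
    rw [hgT s ⟨hl, hr⟩]
    exact ⟨hT ⟨le_rfl, hl.trans hr'⟩ ⟨hl, hr'⟩ hl, hT ⟨hl, hr'⟩ ⟨hl.trans hr', le_rfl⟩ hr'⟩
  have key := integral_abs_sub_average_le hf hg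
    (ae_restrict_of_forall_mem measurableSet_dyadicIco hg_mem)
    (ae_restrict_of_forall_mem measurableSet_dyadicIco hgf)
  rw [measureReal_restrict_apply_univ, volume_real_dyadicIco] at key
  rwa [setIntegral_congr_fun measurableSet_dyadicIco fun s hs => by
    rw [dyadicAvg_eq_setAverage f hs]]

end Dyadic

lemma sub_min_le_sq_div {x B : ℝ} (hx : 0 ≤ x) (hB : 0 < B) : x - min x B ≤ x ^ 2 / B := by
  rw [le_div_iff₀ hB]
  rcases le_total x B with h | h
  · rw [min_eq_left h, sub_self, zero_mul]; positivity
  · rw [min_eq_right h]; nlinarith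

lemma monotoneOn_ite_lt_min {f : ℝ → ℝ} {a b : ℝ} (hf : MonotoneOn f (Ico a b)) (B : ℝ) :
    MonotoneOn (fun x => if x < b then min (f x) B else B) (Ici a) := by
  intro x hx y hy hxy
  by_cases hyb : y < b
  · simp only [if_pos hyb, if_pos (hxy.trans_lt hyb)]
    exact min_le_min_right B (hf ⟨hx, hxy.trans_lt hyb⟩ ⟨hy, hyb⟩ hxy)
  · simp only [if_neg hyb]
    split_ifs <;> simp

theorem stmt0 (μ : ℝ → ℝ) (hmono : MonotoneOn μ (Set.Ico 0 1))
    (hnonneg : ∀ s ∈ Set.Ico (0 : ℝ) 1, 0 ≤ μ s)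
    (hL2 : IntegrableOn (fun s => μ s ^ 2) (Set.Ico 0 1))
    (j : ℕ) (B : ℝ) (hB : 0 < B) :
    ∫ s in Set.Ico (0 : ℝ) 1, |μ s - dyadicAvg j μ s| ≤
      (2 / B) * (∫ s in Set.Ico (0 : ℝ) 1, μ s ^ 2) + B * ((2 : ℝ) ^ j)⁻¹ := by
  set T : ℝ → ℝ := fun x => if x < 1 then min (μ x) B else B
  have hT_mono : MonotoneOn T (Ici 0) := monotoneOn_ite_lt_min hmono B
  have hμ : IntegrableOn μ (Ico 0 1) :=
    ((memLp_two_iff_integrable_sq (aemeasurable_restrict_of_monotoneOn measurableSet_Ico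
      hmono).aestronglyMeasurable).2 hL2).integrable one_le_two
  have hmin : IntegrableOn (fun s => min (μ s) B) (Ico 0 1) := hμ.inf (integrable_const B)
  have hpiece : ∀ k < 2 ^ j, ∫ s in dyadicIco j k, |μ s - dyadicAvg j μ s| ≤
      (T ((k + 1 : ℕ) / 2 ^ j) - T (k / 2 ^ j)) * ((2 : ℝ) ^ j)⁻¹ +
        2 * ∫ s in dyadicIco j k, (μ s - min (μ s) B) := fun k hk =>
    have hsub := dyadicIco_subset_Ico hk
    setIntegral_abs_sub_dyadicAvg_le (hμ.mono_set hsub) (hmin.mono_set hsub)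
      (fun s _ => min_le_left (μ s) B) (hT_mono.mono fun s hs => hs.1.trans' (by positivity))
      fun s hs => (if_pos (hsub hs).2).symm
  calc ∫ s in Ico (0 : ℝ) 1, |μ s - dyadicAvg j μ s|
      = ∑ k ∈ Finset.range (2 ^ j), ∫ s in dyadicIco j k, |μ s - dyadicAvg j μ s| :=
        setIntegral_Ico_zero_one_eq_sum_dyadicIco j fun k hk =>
          integrableOn_abs_sub_dyadicAvg (hμ.mono_set (dyadicIco_subset_Ico hk))
    _ ≤ ∑ k ∈ Finset.range (2 ^ j), ((T ((k + 1 : ℕ) / 2 ^ j) - T (k / 2 ^ j)) *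
          ((2 : ℝ) ^ j)⁻¹ + 2 * ∫ s in dyadicIco j k, (μ s - min (μ s) B)) :=
        Finset.sum_le_sum fun k hk => hpiece k (Finset.mem_range.1 hk)
    _ = (T 1 - T 0) * ((2 : ℝ) ^ j)⁻¹ + 2 * ∫ s in Ico 0 1, (μ s - min (μ s) B) := by
        rw [Finset.sum_add_distrib, ← Finset.sum_mul,
          Finset.sum_range_sub (fun k => T (k / 2 ^ j)), ← Finset.mul_sum,
          ← setIntegral_Ico_zero_one_eq_sum_dyadicIco j (f := fun s => μ s - min (μ s) B)
            fun k hk => (hμ.sub hmin).mono_set (dyadicIco_subset_Ico hk)]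
        push_cast
        rw [zero_div, div_self (by positivity)]
    _ ≤ B * ((2 : ℝ) ^ j)⁻¹ + 2 * ∫ s in Ico 0 1, μ s ^ 2 / B := by
        have hT1 : T 1 = B := if_neg (lt_irrefl 1)
        have hT0 : T 0 = min (μ 0) B := if_pos one_pos
        gcongr ?_ * _ + 2 * ?_
        · linarith [le_min (hnonneg 0 ⟨le_rfl, one_pos⟩) hB.le]
        · exact setIntegral_mono_on (hμ.sub hmin) (hL2.div_const B) measurableSet_Ico
            fun s hs => sub_min_le_sq_div (hnonneg s hs) hB
    _ = (2 / B) * (∫ s in Ico (0 : ℝ) 1, μ s ^ 2) + B * ((2 : ℝ) ^ j)⁻¹ := by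
        rw [integral_div]; ring
end

section
/- Let μ : [0,1) → [0,∞) be nondecreasing and square-integrable, let j ∈ ℕ, and let μ^(j) be the dyadic average of μ at scale j. Then ∫₀¹ |μ(s) − μ^(j)(s)| ds ≤ 2^{(3−j)/2} · (∫₀¹ μ(s)² ds)^{1/2}. -/
open MeasureTheory

/-!
For any constant `c`, the mean oscillation over a cell `I` satisfies
`∫_I |μ - ⨍_I μ| ≤ 2 ∫_I |μ - c|`; take for `c` the value of `μ` at the left endpoint of `I`.
By monotonicity, on every cell but the last `|μ - c|` is bounded by the increment of `μ` up to the
next left endpoint, so these contributions telescope against the last cell and the total is at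
most `2 ∫ μ` over `[1 - 2^{-j}, 1)`. Cauchy–Schwarz on that cell of length `2^{-j}` bounds this
by `2 · 2^{-j/2} ‖μ‖₂ ≤ 2^{(3-j)/2} ‖μ‖₂`.
-/

open Set

section Average

variable {α : Type*} [MeasurableSpace α] {μ : Measure α} {s : Set α} {f : α → ℝ}

theorem setIntegral_abs_sub_setAverage_le (hs : μ s ≠ ⊤) (hf : IntegrableOn f s μ) (c : ℝ) :
    ∫ x in s, |f x - ⨍ y in s, f y ∂μ| ∂μ ≤ 2 * ∫ x in s, |f x - c| ∂μ := by
  set m := ⨍ y in s, f y ∂μ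
  have hconst : IntegrableOn (fun _ => m - c) s μ := integrableOn_const hs
  have hfc : IntegrableOn (fun x => f x - c) s μ := hf.sub (integrableOn_const hs)
  have hmass : μ.real s * (m - c) = ∫ x in s, (f x - c) ∂μ := by
    rw [integral_sub hf (integrableOn_const hs), setIntegral_const, smul_eq_mul, mul_sub,
      ← smul_eq_mul, measure_smul_setAverage f hs]
  calc ∫ x in s, |f x - m| ∂μ ≤ ∫ x in s, (|f x - c| + |m - c|) ∂μ := by
        refine integral_mono_of_nonneg (.of_forall fun _ => abs_nonneg _)
          (hfc.abs.add hconst.abs) (.of_forall fun x => ?_)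
        simpa using abs_sub_le (f x) c m |>.trans_eq (by rw [abs_sub_comm c m])
    _ = ∫ x in s, |f x - c| ∂μ + |∫ x in s, (f x - c) ∂μ| := by
        rw [integral_add hfc.abs hconst.abs, setIntegral_const, smul_eq_mul, ← hmass, abs_mul,
          abs_of_nonneg measureReal_nonneg]
    _ ≤ 2 * ∫ x in s, |f x - c| ∂μ := by
        linarith [abs_integral_le_integral_abs (f := fun x => f x - c) (μ := μ.restrict s)]

theorem sq_setIntegral_le (hs : μ s ≠ ⊤) (hf : IntegrableOn f s μ)
    (hf2 : IntegrableOn (fun x => f x ^ 2) s μ) :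
    (∫ x in s, f x ∂μ) ^ 2 ≤ μ.real s * ∫ x in s, f x ^ 2 ∂μ := by
  rcases eq_or_ne (μ s) 0 with hs0 | hs0
  · simp [Measure.restrict_eq_zero.2 hs0]
  have jensen : (⨍ x in s, f x ∂μ) ^ 2 ≤ ⨍ x in s, f x ^ 2 ∂μ :=
    (Even.convexOn_pow even_two).map_set_average_le (continuous_pow 2).continuousOn isClosed_univ
      hs0 hs (.of_forall fun _ => mem_univ _) hf hf2
  rw [← measure_smul_setAverage _ hs, ← measure_smul_setAverage _ hs, smul_eq_mul, smul_eq_mul,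
    mul_pow, sq, mul_assoc]
  exact mul_le_mul_of_nonneg_left (mul_le_mul_of_nonneg_left jensen measureReal_nonneg)
    measureReal_nonneg

end Average

def gridCell (n k : ℕ) : Set ℝ := Ico ((k : ℝ) / n) (((k : ℝ) + 1) / n)

section UniformGrid

variable {n k : ℕ}

theorem volume_real_gridCell : volume.real (gridCell n k) = (n : ℝ)⁻¹ := by
  rw [gridCell, Real.volume_real_Ico, ← sub_div, add_sub_cancel_left, one_div,
    max_eq_left (by positivity)]

theorem floor_mul_eq_of_mem_gridCell {x : ℝ} (hx : x ∈ gridCell n k) :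
    ⌊(n : ℝ) * x⌋ = k := by
  rcases Nat.eq_zero_or_pos n with rfl | hn
  · simp [gridCell] at hx
  have hn' : (0 : ℝ) < n := by exact_mod_cast hn
  rw [Int.floor_eq_iff, Int.cast_natCast, mul_comm]
  exact ⟨(div_le_iff₀ hn').1 hx.1, (lt_div_iff₀ hn').1 hx.2⟩

theorem gridCell_subset_Ico (hk : k < n) : gridCell n k ⊆ Ico 0 1 := by
  have hn : (0 : ℝ) < n := by exact_mod_cast (k.zero_le.trans_lt hk)
  have hk' : (k : ℝ) + 1 ≤ n := by exact_mod_cast hk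
  refine Ico_subset_Ico (by positivity) ?_
  rwa [div_le_one hn]

theorem measurableSet_gridCell : MeasurableSet (gridCell n k) := measurableSet_Ico

theorem volume_gridCell_lt_top : volume (gridCell n k) < ⊤ := measure_Ico_lt_top

theorem Ico_zero_one_eq_biUnion_gridCell (hn : n ≠ 0) :
    Ico (0 : ℝ) 1 = ⋃ k ∈ Finset.range n, gridCell n k := by
  have hn' : (0 : ℝ) < n := by positivity
  refine Subset.antisymm (fun x hx => ?_) (iUnion₂_subset fun k hk =>
    gridCell_subset_Ico (Finset.mem_range.1 hk))
  have hnx : 0 ≤ (n : ℝ) * x := mul_nonneg hn'.le hx.1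
  refine mem_biUnion (x := ⌊(n : ℝ) * x⌋₊) (Finset.mem_range.2 ?_) ⟨?_, ?_⟩
  · rw [Nat.floor_lt hnx]
    nlinarith [hx.2]
  · rw [div_le_iff₀ hn']
    exact (Nat.floor_le hnx).trans_eq (mul_comm _ _)
  · rw [lt_div_iff₀ hn', mul_comm]
    exact Nat.lt_floor_add_one _

theorem pairwise_disjoint_gridCell : Pairwise (Function.onFun Disjoint (gridCell n)) := by
  have hmono : Monotone fun k : ℕ => (k : ℝ) / n := fun a b hab => by
    simp only; gcongr
  have := hmono.pairwise_disjoint_on_Ico_succ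
  simp only [Order.succ_eq_add_one, Nat.cast_add_one] at this
  exact this

theorem setIntegral_Ico_zero_one_eq_sum_gridCell (hn : n ≠ 0) {f : ℝ → ℝ}
    (hf : ∀ k < n, IntegrableOn f (gridCell n k)) :
    ∫ x in Ico 0 1, f x = ∑ k ∈ Finset.range n, ∫ x in gridCell n k, f x := by
  rw [Ico_zero_one_eq_biUnion_gridCell hn, integral_biUnion_finset _
    (fun _ _ => measurableSet_gridCell) (pairwise_disjoint_gridCell.set_pairwise _)
    fun k hk => hf k (Finset.mem_range.1 hk)]

end UniformGrid

theorem MonotoneOn.sum_setIntegral_abs_sub_gridCell_le {n : ℕ} {f : ℝ → ℝ}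
    (hf : MonotoneOn f (Ico 0 1)) (hfi : IntegrableOn f (Ico 0 1)) (hn : n ≠ 0) :
    ∑ k ∈ Finset.range n, ∫ x in gridCell n k, |f x - f (k / n)| ≤
      (∫ x in gridCell n (n - 1), f x) - f 0 / n := by
  have left_mem : ∀ k < n, (k : ℝ) / n ∈ Ico 0 1 := fun k hk =>
    gridCell_subset_Ico hk ⟨le_rfl, by gcongr; exact lt_add_one _⟩
  have left_le : ∀ k < n, ∀ x ∈ gridCell n k, f (k / n) ≤ f x := fun k hk x hx =>
    hf (left_mem k hk) (gridCell_subset_Ico hk hx) hx.1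
  have inner_cell : ∀ k, k + 1 < n →
      ∫ x in gridCell n k, |f x - f (k / n)| ≤ (f ((k + 1 : ℕ) / n) - f (k / n)) / n := by
    intro k hk
    have le_right : ∀ x ∈ gridCell n k, f x ≤ f ((k + 1 : ℕ) / n) := fun x hx =>
      hf (gridCell_subset_Ico (by omega) hx) (left_mem _ hk) (by push_cast; exact hx.2.le)
    have := norm_setIntegral_le_of_norm_le_const volume_gridCell_lt_top fun x hx =>
      (Real.norm_of_nonneg (abs_nonneg _)).trans_le <|
        (abs_of_nonneg (sub_nonneg.2 (left_le k (by omega) x hx))).trans_le <|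
          sub_le_sub_right (le_right x hx) _
    rwa [volume_real_gridCell, ← div_eq_mul_inv,
      Real.norm_of_nonneg (integral_nonneg fun _ => abs_nonneg _)] at this
  set m := n - 1
  have hm : n = m + 1 := by omega
  have last_cell : ∫ x in gridCell n m, |f x - f (m / n)| =
      (∫ x in gridCell n m, f x) - f (m / n) / n := by
    rw [setIntegral_congr_fun measurableSet_gridCell
      fun x hx => abs_of_nonneg (sub_nonneg.2 (left_le m (by omega) x hx)),
      integral_sub (hfi.mono_set (gridCell_subset_Ico (by omega)))
        (integrableOn_const volume_gridCell_lt_top.ne),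
      setIntegral_const, volume_real_gridCell, smul_eq_mul, inv_mul_eq_div]
  have split := Finset.sum_range_succ (fun k => ∫ x in gridCell n k, |f x - f (k / n)|) m
  rw [← hm] at split
  calc ∑ k ∈ Finset.range n, ∫ x in gridCell n k, |f x - f (k / n)|
      ≤ ∑ k ∈ Finset.range m, (f ((k + 1 : ℕ) / n) - f (k / n)) / n +
        ((∫ x in gridCell n m, f x) - f (m / n) / n) := by
        rw [split, last_cell]
        gcongr with k hk
        exact inner_cell k (by simp at hk; omega)
    _ = (∫ x in gridCell n m, f x) - f 0 / n := by
        rw [← Finset.sum_div, Finset.sum_range_sub fun k => f (k / n)]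
        simp only [Nat.cast_zero, zero_div]
        ring

theorem setIntegral_gridCell_le_sqrt {n k : ℕ} {f : ℝ → ℝ} (hk : k < n)
    (hf : IntegrableOn f (Ico 0 1)) (hf2 : IntegrableOn (fun x => f x ^ 2) (Ico 0 1)) :
    ∫ x in gridCell n k, f x ≤ √((n : ℝ)⁻¹ * ∫ x in Ico 0 1, f x ^ 2) := by
  have hsub := gridCell_subset_Ico hk
  refine Real.le_sqrt_of_sq_le ((sq_setIntegral_le volume_gridCell_lt_top.ne (hf.mono_set hsub)
    (hf2.mono_set hsub)).trans ?_)
  rw [volume_real_gridCell]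
  exact mul_le_mul_of_nonneg_left (setIntegral_mono_set hf2 (.of_forall fun _ => sq_nonneg _)
    hsub.eventuallyLE) (by positivity)

theorem dyadicAvg_eq_setAverage_s1 {j k : ℕ} {f : ℝ → ℝ} {x : ℝ}
    (hx : x ∈ gridCell (2 ^ j) k) :
    dyadicAvg j f x = ⨍ y in gridCell (2 ^ j) k, f y := by
  have hfloor := floor_mul_eq_of_mem_gridCell hx
  push_cast at hfloor
  rw [dyadicAvg, hfloor, setAverage_eq, volume_real_gridCell, inv_inv, smul_eq_mul, gridCell]
  push_cast
  rfl

theorem setIntegral_abs_sub_dyadicAvg_eq_sum (j : ℕ) {f : ℝ → ℝ}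
    (hf : IntegrableOn f (Ico 0 1)) :
    ∫ x in Ico 0 1, |f x - dyadicAvg j f x| = ∑ k ∈ Finset.range (2 ^ j),
      ∫ x in gridCell (2 ^ j) k, |f x - ⨍ y in gridCell (2 ^ j) k, f y| := by
  have on_cell : ∀ k, EqOn (fun x => |f x - dyadicAvg j f x|)
      (fun x => |f x - ⨍ y in gridCell (2 ^ j) k, f y|) (gridCell (2 ^ j) k) :=
    fun k x hx => by simp only [dyadicAvg_eq_setAverage_s1 hx]
  rw [setIntegral_Ico_zero_one_eq_sum_gridCell (by positivity) fun k hk =>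
    IntegrableOn.congr_fun ((hf.mono_set (gridCell_subset_Ico hk)).sub
      (integrableOn_const volume_gridCell_lt_top.ne)).abs (on_cell k).symm measurableSet_gridCell]
  exact Finset.sum_congr rfl fun k _ => setIntegral_congr_fun measurableSet_gridCell (on_cell k)

theorem two_mul_sqrt_inv_two_pow_mul_le (j : ℕ) (Q : ℝ) :
    2 * √(((2 : ℝ) ^ j)⁻¹ * Q) ≤ (2 : ℝ) ^ (((3 : ℝ) - j) / 2) * √Q := by
  have hsqrt : √(((2 : ℝ) ^ j)⁻¹) = (2 : ℝ) ^ (-(j : ℝ) / 2) := by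
    rw [Real.sqrt_eq_rpow, ← Real.rpow_natCast, ← Real.rpow_neg_one,
      ← Real.rpow_mul zero_le_two, ← Real.rpow_mul zero_le_two]
    ring_nf
  rw [Real.sqrt_mul (by positivity), hsqrt, ← mul_assoc]
  gcongr
  calc (2 : ℝ) * 2 ^ (-(j : ℝ) / 2) = 2 ^ (1 + -(j : ℝ) / 2) := by
        rw [Real.rpow_add two_pos, Real.rpow_one]
    _ ≤ 2 ^ (((3 : ℝ) - j) / 2) := Real.rpow_le_rpow_of_exponent_le one_le_two (by linarith)

theorem stmt1 (μ : ℝ → ℝ) (hmono : MonotoneOn μ (Set.Ico 0 1))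
    (hnonneg : ∀ s ∈ Set.Ico (0 : ℝ) 1, 0 ≤ μ s)
    (hL2 : IntegrableOn (fun s => μ s ^ 2) (Set.Ico 0 1))
    (j : ℕ) :
    ∫ s in Set.Ico (0 : ℝ) 1, |μ s - dyadicAvg j μ s| ≤
      (2 : ℝ) ^ (((3 : ℝ) - j) / 2) * Real.sqrt (∫ s in Set.Ico (0 : ℝ) 1, μ s ^ 2) := by
  set n := 2 ^ j
  have hn : n ≠ 0 := by positivity
  have hμ : IntegrableOn μ (Ico 0 1) :=
    ((memLp_two_iff_integrable_sq (aemeasurable_restrict_of_monotoneOn measurableSet_Ico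
      hmono).aestronglyMeasurable).2 hL2).integrable one_le_two
  calc ∫ s in Ico 0 1, |μ s - dyadicAvg j μ s|
      = ∑ k ∈ Finset.range n, ∫ x in gridCell n k, |μ x - ⨍ y in gridCell n k, μ y| :=
        setIntegral_abs_sub_dyadicAvg_eq_sum j hμ
    _ ≤ ∑ k ∈ Finset.range n, 2 * ∫ x in gridCell n k, |μ x - μ (k / n)| :=
        Finset.sum_le_sum fun k hk => setIntegral_abs_sub_setAverage_le volume_gridCell_lt_top.ne
          (hμ.mono_set (gridCell_subset_Ico (Finset.mem_range.1 hk))) _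
    _ ≤ 2 * ((∫ x in gridCell n (n - 1), μ x) - μ 0 / n) := by
        rw [← Finset.mul_sum]
        gcongr
        exact hmono.sum_setIntegral_abs_sub_gridCell_le hμ hn
    _ ≤ 2 * √((n : ℝ)⁻¹ * ∫ s in Ico 0 1, μ s ^ 2) := by
        have : 0 ≤ μ 0 / n := div_nonneg (hnonneg 0 ⟨le_rfl, one_pos⟩) (Nat.cast_nonneg n)
        linarith [setIntegral_gridCell_le_sqrt (Nat.sub_one_lt hn) hμ hL2]
    _ ≤ _ := by
        push_cast [n]
        exact two_mul_sqrt_inv_two_pow_mul_le j _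
end
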